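/- arXiv:1609.05044 — 6 statements merged into one kernel-verified Lean document; each statement's English description precedes it below -/
import Mathlib

section
/- For any matrices f, h in SL(2,C), the trace identity tr[f, h f h⁻¹] = (tr[f,h] − 2)(tr[f,h] − tr²(f) + 2) + 2 holds, where [x,y] = x y x⁻¹ y⁻¹ denotes the commutator. -/
/-!
In `SL(2, R)` Cayley–Hamilton reads `A⁻¹ = (tr A) • 1 - A`, so `tr (A B⁻¹) = tr A tr B - tr (A B)`;
this relation yields the Fricke formula for `tr ⁅A, B⁆` in terms of `tr A`, `tr B`, `tr (A B)`.
Since `h f h⁻¹ = ⁅f, h⁆⁻¹ f`, we have `⁅f, h f h⁻¹⁆ = ⁅f, ⁅f, h⁆⁻¹⁆`, and `f ⁅f, h⁆⁻¹` is conjugate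
to `f`; so the Fricke formula for the pair `f, ⁅f, h⁆⁻¹` involves only `tr f` and `tr ⁅f, h⁆`.
-/

open Matrix Complex
open scoped commutatorElement

noncomputable def tr (M : Matrix.SpecialLinearGroup (Fin 2) ℂ) : ℂ :=
  Matrix.trace (M : Matrix (Fin 2) (Fin 2) ℂ)

namespace Matrix.SpecialLinearGroup

open scoped MatrixGroups

variable {R : Type*} [CommRing R]

local notation "τ" A:max => Matrix.trace ((A : SL(2, R)) : Matrix (Fin 2) (Fin 2) R)

theorem coe_inv_eq_trace_smul_one_sub (A : SL(2, R)) :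
    ((A⁻¹ : SL(2, R)) : Matrix (Fin 2) (Fin 2) R) = τ A • 1 - A := by
  rw [coe_inv, adjugate_fin_two, trace_fin_two]
  ext i j
  fin_cases i <;> fin_cases j <;> simp

theorem trace_mul_inv (A B : SL(2, R)) : τ (A * B⁻¹) = τ A * τ B - τ (A * B) := by
  rw [coe_mul, coe_inv_eq_trace_smul_one_sub, Matrix.mul_sub, Matrix.mul_smul, Matrix.mul_one,
    trace_sub, trace_smul, smul_eq_mul, mul_comm, coe_mul]

theorem trace_mul (A B : SL(2, R)) : τ (A * B) = τ A * τ B - τ (A * B⁻¹) := by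
  rw [trace_mul_inv]
  ring

theorem trace_inv (A : SL(2, R)) : τ A⁻¹ = τ A := by
  simpa [two_mul] using trace_mul_inv 1 A

theorem trace_mul_self (A : SL(2, R)) : τ (A * A) = τ A ^ 2 - 2 := by
  simpa [trace_inv, sq] using trace_mul A A

theorem trace_conj (g A : SL(2, R)) : τ (g * A * g⁻¹) = τ A := by
  rw [coe_mul, trace_mul_comm, ← coe_mul, inv_mul_cancel_left]

theorem trace_inv_mul (A B : SL(2, R)) : τ (A⁻¹ * B) = τ A * τ B - τ (A * B) := by
  rw [coe_mul, trace_mul_comm, ← coe_mul, trace_mul_inv, coe_mul, trace_mul_comm, ← coe_mul,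
    mul_comm]

theorem trace_commutatorElement (A B : SL(2, R)) :
    τ ⁅A, B⁆ = τ A ^ 2 + τ B ^ 2 + τ (A * B) ^ 2 - τ A * τ B * τ (A * B) - 2 := by
  have hsplit : A * B * A⁻¹ * B = (A * B) * (A⁻¹ * B) := by group
  have hAA : A * B * (A⁻¹ * B)⁻¹ = A * A := by group
  rw [commutatorElement_def, trace_mul_inv, trace_conj, hsplit, trace_mul, hAA, trace_mul_self,
    trace_inv_mul]
  ring

end Matrix.SpecialLinearGroup

open Matrix.SpecialLinearGroup in
theorem trace_commutator_identity (f h : Matrix.SpecialLinearGroup (Fin 2) ℂ) :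
    tr ⁅f, h * f * h⁻¹⁆ =
      (tr ⁅f, h⁆ - 2) * (tr ⁅f, h⁆ - (tr f) ^ 2 + 2) + 2 := by
  have hcomm : ⁅f, h * f * h⁻¹⁆ = ⁅f, ⁅f, h⁆⁻¹⁆ := by
    simp only [commutatorElement_def]
    group
  have hconj : f * ⁅f, h⁆⁻¹ = (f * h) * f * (f * h)⁻¹ := by
    simp only [commutatorElement_def]
    group
  simp only [tr]
  rw [hcomm, trace_commutatorElement, trace_inv, hconj, SpecialLinearGroup.trace_conj]
  ring
end

section
/- If f, h ∈ SL(2,C) and tr²(f) = 2, then |tr[f, h f h⁻¹] − 1| = |tr[f,h] − 1|². -/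
open Matrix Complex
open scoped commutatorElement

/-!
Put `g = h f h⁻¹`. Then `tr g = tr f`, and `tr (f g) + tr (f g⁻¹) = tr f · tr g` with
`f g⁻¹ = [f, h]` gives `tr (f g) = tr² f - tr [f, h]`. Substituting both into Fricke's formula
`tr [f, g] = tr² f + tr² g + tr² (f g) - tr f · tr g · tr (f g) - 2` yields
`tr [f, g] = (tr [f, h] - 2) (tr [f, h] - tr² f + 2) + 2`, which for `tr² f = 2` reads
`tr [f, g] - 1 = (tr [f, h] - 1)²`.
-/

namespace Matrix

variable {R : Type*} [CommRing R] (A B : Matrix (Fin 2) (Fin 2) R)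

theorem trace_mul_add_trace_mul_adjugate_fin_two :
    trace (A * B) + trace (A * adjugate B) = trace A * trace B := by
  simp only [trace_fin_two, mul_apply, Fin.sum_univ_two, adjugate_fin_two, of_apply, cons_val',
    cons_val_zero, cons_val_one, empty_val', cons_val_fin_one]
  ring

theorem trace_mul_mul_adjugate_mul_adjugate_fin_two :
    trace (A * B * adjugate A * adjugate B) =
      det B * trace A ^ 2 + det A * trace B ^ 2 + trace (A * B) ^ 2
        - trace A * trace B * trace (A * B) - 2 * det A * det B := by
  simp only [trace_fin_two, det_fin_two, mul_apply, Fin.sum_univ_two, adjugate_fin_two, of_apply,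
    cons_val', cons_val_zero, cons_val_one, empty_val', cons_val_fin_one]
  ring

end Matrix

section SL2

variable (f g h : SpecialLinearGroup (Fin 2) ℂ)

theorem tr_conj : tr (h * f * h⁻¹) = tr f := by
  rw [tr, Matrix.SpecialLinearGroup.coe_mul, trace_mul_comm, ← Matrix.SpecialLinearGroup.coe_mul,
    inv_mul_cancel_left]
  rfl

theorem tr_mul_add_tr_mul_inv : tr (f * g) + tr (f * g⁻¹) = tr f * tr g := by
  simpa only [tr, Matrix.SpecialLinearGroup.coe_mul, Matrix.SpecialLinearGroup.coe_inv]
    using trace_mul_add_trace_mul_adjugate_fin_two (f : Matrix (Fin 2) (Fin 2) ℂ) g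

theorem tr_commutator :
    tr ⁅f, g⁆ = tr f ^ 2 + tr g ^ 2 + tr (f * g) ^ 2 - tr f * tr g * tr (f * g) - 2 := by
  have h := trace_mul_mul_adjugate_mul_adjugate_fin_two (f : Matrix (Fin 2) (Fin 2) ℂ) g
  simp only [Matrix.SpecialLinearGroup.det_coe] at h
  simp only [tr, commutatorElement_def, Matrix.SpecialLinearGroup.coe_mul,
    Matrix.SpecialLinearGroup.coe_inv, h]
  ring

theorem tr_mul_conj : tr (f * (h * f * h⁻¹)) = tr f ^ 2 - tr ⁅f, h⁆ := by
  have h_inv : f * (h * f * h⁻¹)⁻¹ = ⁅f, h⁆ := by group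
  rw [eq_sub_iff_add_eq, ← h_inv, tr_mul_add_tr_mul_inv, tr_conj, sq]

theorem tr_commutator_conj :
    tr ⁅f, h * f * h⁻¹⁆ = (tr ⁅f, h⁆ - 2) * (tr ⁅f, h⁆ - tr f ^ 2 + 2) + 2 := by
  rw [tr_commutator, tr_conj, tr_mul_conj]
  ring

end SL2

theorem abs_trace_comm_conj (f h : Matrix.SpecialLinearGroup (Fin 2) ℂ)
    (hf : (tr f) ^ 2 = 2) :
    ‖tr ⁅f, h * f * h⁻¹⁆ - 1‖ = (‖tr ⁅f, h⁆ - 1‖) ^ 2 := by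
  rw [tr_commutator_conj, hf, ← norm_pow]
  congr 1
  ring
end

section
/- If f, g ∈ SL(2,C) with tr²(f) = 2 and |tr[f,g] − 1| = 1, and h ∈ SL(2,C) satisfies h f h⁻¹ = g, then |tr²(f) − 2| + |tr[f,h] − 1| = 1. -/
/-!
With `g = h f h⁻¹` one has `⁅f, h⁆ = f g⁻¹`, so in `SL(2)` the identity
`tr (A B⁻¹) = tr A tr B - tr (A B)` gives `tr ⁅f, h⁆ = tr² f - t` with `t = tr (f g)`, while
Fricke's identity gives `tr ⁅f, g⁆ = 2 tr² f + t² - tr² f · t - 2`. When `tr² f = 2` this reads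
`tr ⁅f, g⁆ - 1 = (t - 1)²` and `tr ⁅f, h⁆ - 1 = 1 - t`, hence `|tr ⁅f, h⁆ - 1|² = |tr ⁅f, g⁆ - 1| = 1`.
-/

open Matrix Complex
open scoped commutatorElement

open scoped MatrixGroups

namespace Matrix

variable {R : Type*} [CommRing R]

theorem adjugate_fin_two_eq_trace_smul_sub (A : Matrix (Fin 2) (Fin 2) R) :
    adjugate A = trace A • 1 - A := by
  ext i j
  fin_cases i <;> fin_cases j <;> simp [adjugate_fin_two, trace_fin_two]

theorem trace_mul_adjugate_fin_two (A B : Matrix (Fin 2) (Fin 2) R) :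
    trace (A * adjugate B) = trace A * trace B - trace (A * B) := by
  rw [adjugate_fin_two_eq_trace_smul_sub, mul_sub, mul_smul_comm, mul_one, trace_sub, trace_smul,
    smul_eq_mul, mul_comm]

namespace SpecialLinearGroup

local notation:1024 "↑ₘ" A:1024 => ((A : SL(2, R)) : Matrix (Fin 2) (Fin 2) R)

theorem trace_mul_inv_fin_two (A B : SL(2, R)) :
    trace ↑ₘ(A * B⁻¹) = trace ↑ₘA * trace ↑ₘB - trace ↑ₘ(A * B) := by
  rw [coe_mul, coe_inv, trace_mul_adjugate_fin_two, coe_mul]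

theorem trace_conj_s3 (A h : SL(2, R)) : trace ↑ₘ(h * A * h⁻¹) = trace ↑ₘA := by
  rw [coe_mul, trace_mul_comm, ← coe_mul, ← mul_assoc, inv_mul_cancel, one_mul]

theorem coe_mul_self_fin_two (A : SL(2, R)) : ↑ₘ(A * A) = trace ↑ₘA • ↑ₘA - 1 :=
  calc ↑ₘ(A * A) = ↑ₘA * (trace ↑ₘA • 1 - adjugate ↑ₘA) := by
        rw [adjugate_fin_two_eq_trace_smul_sub, sub_sub_cancel, coe_mul]
    _ = trace ↑ₘA • ↑ₘA - 1 := by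
        rw [mul_sub, mul_smul_comm, mul_one, mul_adjugate, A.prop, one_smul]

theorem trace_commutatorElement_fin_two (A B : SL(2, R)) :
    trace ↑ₘ⁅A, B⁆ = trace ↑ₘA ^ 2 + trace ↑ₘB ^ 2 + trace ↑ₘ(A * B) ^ 2
        - trace ↑ₘA * trace ↑ₘB * trace ↑ₘ(A * B) - 2 := by
  have hcomm : ⁅A, B⁆ = A * B * (B * A)⁻¹ := by group
  have hBA : trace ↑ₘ(B * A) = trace ↑ₘ(A * B) := by rw [coe_mul, trace_mul_comm, coe_mul]
  have hcycle : trace ↑ₘ(A * B * (B * A)) = trace (↑ₘ(A * A) * ↑ₘ(B * B)) := by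
    rw [coe_mul, coe_mul, coe_mul, ← Matrix.mul_assoc, trace_mul_comm, coe_mul, coe_mul]
    simp only [Matrix.mul_assoc]
  rw [hcomm, trace_mul_inv_fin_two, hBA, hcycle, coe_mul_self_fin_two, coe_mul_self_fin_two]
  simp only [sub_mul, mul_sub, smul_mul_assoc, mul_smul_comm, one_mul, mul_one, trace_sub,
    trace_smul, trace_one, coe_mul, smul_eq_mul, Fintype.card_fin, Nat.cast_ofNat]
  ring

theorem trace_commutatorElement_conj_sub_one {A : SL(2, R)} (hA : trace ↑ₘA ^ 2 = 2)
    (h : SL(2, R)) :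
    trace ↑ₘ⁅A, h * A * h⁻¹⁆ - 1 = (trace ↑ₘ⁅A, h⁆ - 1) ^ 2 := by
  have hcomm : ⁅A, h⁆ = A * (h * A * h⁻¹)⁻¹ := by group
  rw [hcomm, trace_commutatorElement_fin_two, trace_conj_s3, trace_mul_inv_fin_two A, trace_conj_s3]
  linear_combination (trace ↑ₘ(A * (h * A * h⁻¹)) - trace ↑ₘA ^ 2 + 2) * hA

end SpecialLinearGroup
end Matrix

theorem gmt_case_i (f g h : Matrix.SpecialLinearGroup (Fin 2) ℂ)
    (hf : (tr f) ^ 2 = 2)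
    (hfg : ‖tr ⁅f, g⁆ - 1‖ = 1)
    (hh : h * f * h⁻¹ = g) :
    ‖(tr f) ^ 2 - 2‖ + ‖tr ⁅f, h⁆ - 1‖ = 1 := by
  subst hh
  have hsq : ‖tr ⁅f, h⁆ - 1‖ ^ 2 = 1 := by
    rw [← norm_pow, ← hfg]
    exact congrArg norm (SpecialLinearGroup.trace_commutatorElement_conj_sub_one hf h).symm
  rw [hf, sub_self, norm_zero, zero_add]
  exact (pow_eq_one_iff_of_nonneg (norm_nonneg _) two_ne_zero).1 hsq
end

section
/- If f, h ∈ SL(2,C) with tr²(f) = 2 and h f h⁻¹ = f⁻¹, then |tr²(f) − 2| + |tr[f,h] − 1| = 1. -/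
open Matrix Complex
open scoped commutatorElement

theorem commutatorElement_eq_sq_of_conj_eq_inv {G : Type*} [Group G] {f h : G}
    (hh : h * f * h⁻¹ = f⁻¹) : ⁅f, h⁆ = f ^ 2 := by
  calc ⁅f, h⁆ = f * (h * f * h⁻¹)⁻¹ := by group
    _ = f ^ 2 := by rw [hh, inv_inv, sq]

theorem Matrix.trace_sq_fin_two {R : Type*} [CommRing R] (A : Matrix (Fin 2) (Fin 2) R) :
    trace (A ^ 2) = trace A ^ 2 - 2 * det A := by
  simp only [sq, trace_fin_two, det_fin_two, mul_apply, Fin.sum_univ_two]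
  ring

theorem tr_sq (f : Matrix.SpecialLinearGroup (Fin 2) ℂ) : tr (f ^ 2) = tr f ^ 2 - 2 := by
  simpa [tr, SpecialLinearGroup.det_coe] using trace_sq_fin_two (f : Matrix (Fin 2) (Fin 2) ℂ)

theorem gmt_case_ii (f h : Matrix.SpecialLinearGroup (Fin 2) ℂ)
    (hf : (tr f) ^ 2 = 2)
    (hh : h * f * h⁻¹ = f⁻¹) :
    ‖(tr f) ^ 2 - 2‖ + ‖tr ⁅f, h⁆ - 1‖ = 1 := by
  rw [commutatorElement_eq_sq_of_conj_eq_inv hh, tr_sq, hf]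
  norm_num
end

section
/- Let n ≥ 4 and let d ∈ ℂ satisfy cosh(d) = (1/4)(1 + cot²(π/n) − i√(3cot⁴(π/n) + 14cot²(π/n) − 5)). Define ρ_n and b_n as the matrices [[cos(π/n), i e^{±d/2} sin(π/n)], [i e^{∓d/2} sin(π/n), cos(π/n)]] respectively. Then |tr[ρ_n, b_n] − 1| = 1. -/
/-!
`ρ = !![c, p; q, c]` and `b = !![c, q; p, c]` have determinant `c² - pq = 1`, so inverting them
only flips the sign of `p` and `q`, and a direct computation gives
`tr [ρ, b] = 2 + (p² - q²)² = 2 + 4 sin⁴(π/n) sinh² d`.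
The prescribed value of `cosh d` is exactly what makes `2 sin²(π/n) cosh d = (1 - t i)/2` with
`t` real and `t² = 3 + 8u - 16u²`, `u = sin²(π/n)`; then `tr [ρ, b] - 1 = (1/2 - 2u) - (t/2) i`,
whose squared modulus is `1`.
-/

open Matrix Complex Real

noncomputable def rhoMat (n : ℕ) (d : ℂ) : Matrix (Fin 2) (Fin 2) ℂ :=
  !![Complex.cos ((Real.pi : ℂ) / n), Complex.I * Complex.exp (d / 2) * Complex.sin ((Real.pi : ℂ) / n);
     Complex.I * Complex.exp (-d / 2) * Complex.sin ((Real.pi : ℂ) / n), Complex.cos ((Real.pi : ℂ) / n)]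

noncomputable def bMat (n : ℕ) (d : ℂ) : Matrix (Fin 2) (Fin 2) ℂ :=
  !![Complex.cos ((Real.pi : ℂ) / n), Complex.I * Complex.exp (-d / 2) * Complex.sin ((Real.pi : ℂ) / n);
     Complex.I * Complex.exp (d / 2) * Complex.sin ((Real.pi : ℂ) / n), Complex.cos ((Real.pi : ℂ) / n)]

noncomputable def cotPi (n : ℕ) : ℝ := Real.cos (Real.pi / n) / Real.sin (Real.pi / n)

section FinTwo
variable {R : Type*} [CommRing R]

lemma Matrix.inv_fin_two_of_det_eq_one {a b c d : R} (h : a * d - b * c = 1) :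
    !![a, b; c, d]⁻¹ = !![d, -b; -c, a] := by
  rw [Matrix.inv_def, det_fin_two_of, h, Ring.inverse_one, one_smul, adjugate_fin_two_of]

lemma Matrix.trace_commutator_fin_two_swap {a b c : R} (h : c ^ 2 - a * b = 1) :
    trace (!![c, a; b, c] * !![c, b; a, c] * !![c, a; b, c]⁻¹ * !![c, b; a, c]⁻¹) =
      2 + (a ^ 2 - b ^ 2) ^ 2 := by
  rw [inv_fin_two_of_det_eq_one (by linear_combination h),
    inv_fin_two_of_det_eq_one (by linear_combination h)]
  simp only [mul_fin_two, trace_fin_two_of]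
  linear_combination (2 * c ^ 2 + 2 - 2 * a * b) * h

end FinTwo

lemma trace_commutator_rhoMat_bMat (n : ℕ) (d : ℂ) :
    trace (rhoMat n d * bMat n d * (rhoMat n d)⁻¹ * (bMat n d)⁻¹) =
      2 + 4 * Complex.sin (π / n) ^ 4 * Complex.sinh d ^ 2 := by
  set s := Complex.sin (π / n)
  set E := Complex.exp (d / 2)
  set F := Complex.exp (-d / 2)
  have hexp : E * F = 1 := by
    rw [← Complex.exp_add, neg_div, add_neg_cancel, Complex.exp_zero]
  have hsinh : E ^ 2 - F ^ 2 = 2 * Complex.sinh d := by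
    rw [two_sinh, ← Complex.exp_nat_mul, ← Complex.exp_nat_mul]
    ring_nf
  rw [rhoMat, bMat, trace_commutator_fin_two_swap]
  · linear_combination (I ^ 2 - 1) * s ^ 4 * (E ^ 2 - F ^ 2) ^ 2 * I_sq
      + s ^ 4 * (E ^ 2 - F ^ 2 + 2 * Complex.sinh d) * hsinh
  · linear_combination Complex.sin_sq_add_cos_sq _ - E * F * s ^ 2 * I_sq + s ^ 2 * hexp

lemma one_le_cotPi {n : ℕ} (hn : 4 ≤ n) : 1 ≤ cotPi n := by
  have hn' : (4 : ℝ) ≤ n := by exact_mod_cast hn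
  have hpos : 0 < π / n := by positivity
  have hle : π / n ≤ π / 4 := by gcongr
  have htan : Real.tan (π / n) ≤ 1 := by
    rw [← Real.tan_pi_div_four]
    exact Real.strictMonoOn_tan.monotoneOn ⟨by linarith, by linarith⟩
      ⟨by linarith [Real.pi_pos], by linarith [Real.pi_pos]⟩ hle
  rw [cotPi, ← inv_div, ← Real.tan_eq_sin_div_cos]
  exact (one_le_inv₀ (Real.tan_pos_of_pos_of_lt_pi_div_two hpos (by linarith))).2 htan

lemma norm_one_sub_four_mul_sq_add_sq_eq_one {u t : ℝ} (h : t ^ 2 = 3 + 8 * u - 16 * u ^ 2) :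
    ‖1 - 4 * u ^ 2 + ((1 - t * I) / 2) ^ 2‖ = 1 := by
  have hC : (t : ℂ) ^ 2 = 3 + 8 * u - 16 * u ^ 2 := by exact_mod_cast h
  have hre_im :
      1 - 4 * u ^ 2 + ((1 - t * I) / 2) ^ 2 = ((1 / 2 - 2 * u : ℝ) : ℂ) + ((-t / 2 : ℝ) : ℂ) * I := by
    push_cast
    linear_combination (t ^ 2 / 4) * I_sq - hC / 4
  rw [hre_im, Complex.norm_def, normSq_add_mul_I, ← Real.sqrt_one]
  congr 1
  linear_combination h / 4

lemma norm_one_add_four_mul_sinh_sq_eq_one {x y k : ℝ} {d : ℂ} (hxy : x ^ 2 + y ^ 2 = 1)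
    (hk : k * x = y) (hW : 0 ≤ 3 * k ^ 4 + 14 * k ^ 2 - 5)
    (hd : Complex.cosh d = (1 / 4) * (1 + (k : ℂ) ^ 2 -
      I * (Real.sqrt (3 * k ^ 4 + 14 * k ^ 2 - 5) : ℝ))) :
    ‖1 + 4 * (x : ℂ) ^ 4 * Complex.sinh d ^ 2‖ = 1 := by
  set W := Real.sqrt (3 * k ^ 4 + 14 * k ^ 2 - 5)
  have hcosh : 2 * (x : ℂ) ^ 2 * Complex.cosh d = (1 - ((x ^ 2 * W : ℝ) : ℂ) * I) / 2 := by
    have hkC : (k : ℂ) * x = y := by exact_mod_cast hk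
    have hxyC : (x : ℂ) ^ 2 + y ^ 2 = 1 := by exact_mod_cast hxy
    rw [hd]
    push_cast
    linear_combination (((k : ℂ) * x + y) * hkC + hxyC) / 2
  have ht : (x ^ 2 * W) ^ 2 = 3 + 8 * x ^ 2 - 16 * (x ^ 2) ^ 2 := by
    linear_combination x ^ 4 * Real.sq_sqrt hW
      + (3 * k ^ 2 * x ^ 2 + 3 * y ^ 2 + 14 * x ^ 2) * (k * x + y) * hk
      + (3 * y ^ 2 + 3 + 11 * x ^ 2) * hxy
  calc ‖1 + 4 * (x : ℂ) ^ 4 * Complex.sinh d ^ 2‖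
      = ‖1 - 4 * (x : ℂ) ^ 4 + (2 * (x : ℂ) ^ 2 * Complex.cosh d) ^ 2‖ := by
        congr 1
        linear_combination (-4 * (x : ℂ) ^ 4) * Complex.cosh_sq d
    _ = 1 := by
        rw [hcosh]
        convert norm_one_sub_four_mul_sq_add_sq_eq_one ht using 4
        push_cast
        ring

theorem abs_trace_comm_rho_b (n : ℕ) (hn : 4 ≤ n) (d : ℂ)
    (hd : Complex.cosh d =
      (1 / 4) * (1 + (cotPi n : ℂ) ^ 2 -
        Complex.I * (Real.sqrt (3 * (cotPi n) ^ 4 + 14 * (cotPi n) ^ 2 - 5) : ℝ))) :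
    ‖(Matrix.trace (rhoMat n d * bMat n d * (rhoMat n d)⁻¹ * (bMat n d)⁻¹) - 1)‖ = 1 := by
  have hsin : 0 < Real.sin (π / n) :=
    Real.sin_pos_of_pos_of_lt_pi (by positivity)
      (div_lt_self Real.pi_pos (by exact_mod_cast (by omega : 1 < n)))
  have hk : cotPi n * Real.sin (π / n) = Real.cos (π / n) := div_mul_cancel₀ _ hsin.ne'
  have hW : 0 ≤ 3 * cotPi n ^ 4 + 14 * cotPi n ^ 2 - 5 := by nlinarith [one_le_cotPi hn]
  have hs : Complex.sin (π / n) = (Real.sin (π / n) : ℂ) := by norm_cast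
  rw [trace_commutator_rhoMat_bMat, hs, add_sub_right_comm, show (2 : ℂ) - 1 = 1 by norm_num]
  exact norm_one_add_four_mul_sinh_sq_eq_one (Real.sin_sq_add_cos_sq _) hk hW hd
end

section
/- In the figure-eight knot group Γ = ⟨ρ, b | ρ⁻¹[b,ρ] = [b,ρ]b⟩, the automorphism τ defined by τ(ρ) = ρbρ⁻¹, τ(b) = b⁻¹ρb satisfies τ⁴ = id, and τ²(ρ) = b⁻¹, τ²(b) = ρ⁻¹. -/
open FreeGroup
open scoped commutatorElement

def figRel : FreeGroup (Fin 2) :=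
  (FreeGroup.of (0 : Fin 2))⁻¹ * ⁅FreeGroup.of (1 : Fin 2), FreeGroup.of (0 : Fin 2)⁆ *
    (⁅FreeGroup.of (1 : Fin 2), FreeGroup.of (0 : Fin 2)⁆ * FreeGroup.of (1 : Fin 2))⁻¹

def FigEightGroup : Type := PresentedGroup ({figRel} : Set (FreeGroup (Fin 2)))

noncomputable instance : Group FigEightGroup := by
  unfold FigEightGroup; infer_instance

noncomputable def ρ : FigEightGroup := PresentedGroup.of 0
noncomputable def b : FigEightGroup := PresentedGroup.of 1

/-!
The substitution `ρ ↦ ρbρ⁻¹, b ↦ b⁻¹ρb` carries the relator to a conjugate of itself (after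
using the relation once, to rewrite `⁅τ b, τ ρ⁆ = τ b * b`), so it induces an endomorphism `τ`.
Applying the substitution twice gives `ρ ↦ b⁻¹, b ↦ ρ⁻¹` modulo the relation, and doing that
twice more returns the generators, so `τ⁴ = 1` and `τ` is invertible with inverse `τ³`.
-/

section Relator

variable {G H : Type*} [Group G] [Group H]

def figEightRelator (x y : G) : G := x⁻¹ * ⁅y, x⁆ * (⁅y, x⁆ * y)⁻¹

lemma figRel_eq_figEightRelator : figRel = figEightRelator (.of 0) (.of 1) := rfl

lemma map_figEightRelator {F : Type*} [FunLike F G H] [MonoidHomClass F G H] (f : F) (x y : G) :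
    f (figEightRelator x y) = figEightRelator (f x) (f y) := by
  simp only [figEightRelator, _root_.map_mul, _root_.map_inv, map_commutatorElement]

variable {x y : G}

lemma commutator_tau_eq (h : figEightRelator x y = 1) :
    ⁅y⁻¹ * x * y, x * y * x⁻¹⁆ = y⁻¹ * x * y * y :=
  calc ⁅y⁻¹ * x * y, x * y * x⁻¹⁆
      = (y⁻¹ * x * y * x * y * x⁻¹ * y⁻¹) * figEightRelator x y *
          (y⁻¹ * x * y * x * y * x⁻¹ * y⁻¹)⁻¹ * (y⁻¹ * x * y * y) := by
        simp only [figEightRelator, commutatorElement_def]; group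
    _ = y⁻¹ * x * y * y := by rw [h]; group

lemma figEightRelator_tau (h : figEightRelator x y = 1) :
    figEightRelator (x * y * x⁻¹) (y⁻¹ * x * y) = 1 :=
  calc figEightRelator (x * y * x⁻¹) (y⁻¹ * x * y)
      = (x * y * x⁻¹)⁻¹ * (y⁻¹ * x * y * y) * (y⁻¹ * x * y * y * (y⁻¹ * x * y))⁻¹ := by
        rw [figEightRelator, commutator_tau_eq h]
    _ = (y⁻¹ * x) * figEightRelator x y * (y⁻¹ * x)⁻¹ := by
        simp only [figEightRelator, commutatorElement_def]; group
    _ = 1 := by rw [h]; group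

lemma tau_tau_fst (h : figEightRelator x y = 1) :
    x * y * x⁻¹ * (y⁻¹ * x * y) * (x * y * x⁻¹)⁻¹ = y⁻¹ :=
  calc x * y * x⁻¹ * (y⁻¹ * x * y) * (x * y * x⁻¹)⁻¹
      = (x * y * x⁻¹ * y⁻¹ * x) * (figEightRelator x y)⁻¹ * (x * y * x⁻¹ * y⁻¹ * x)⁻¹ * y⁻¹ := by
        simp only [figEightRelator, commutatorElement_def]; group
    _ = y⁻¹ := by rw [h]; group

lemma tau_tau_snd (h : figEightRelator x y = 1) :
    (y⁻¹ * x * y)⁻¹ * (x * y * x⁻¹) * (y⁻¹ * x * y) = x⁻¹ :=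
  calc (y⁻¹ * x * y)⁻¹ * (x * y * x⁻¹) * (y⁻¹ * x * y)
      = (x⁻¹ * y⁻¹) * (figEightRelator x y)⁻¹ * (x⁻¹ * y⁻¹)⁻¹ * x⁻¹ := by
        simp only [figEightRelator, commutatorElement_def]; group
    _ = x⁻¹ := by rw [h]; group

end Relator

namespace FigEightGroup

lemma figEightRelator_ρ_b : figEightRelator ρ b = 1 := by
  have h : (PresentedGroup.mk _ figRel : FigEightGroup) = 1 := PresentedGroup.one_of_mem rfl
  rwa [figRel_eq_figEightRelator, map_figEightRelator] at h

variable {G : Type*} [Group G] {x y : G}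

noncomputable def lift (h : figEightRelator x y = 1) : FigEightGroup →* G :=
  PresentedGroup.toGroup (f := ![x, y]) <| by
    rintro r rfl
    rw [figRel_eq_figEightRelator, map_figEightRelator]
    simpa using h

lemma lift_ρ (h : figEightRelator x y = 1) : lift h ρ = x :=
  PresentedGroup.toGroup.of _

lemma lift_b (h : figEightRelator x y = 1) : lift h b = y :=
  PresentedGroup.toGroup.of _

lemma hom_ext {f g : FigEightGroup →* G} (hρ : f ρ = g ρ) (hb : f b = g b) : f = g :=
  PresentedGroup.ext fun i => by fin_cases i <;> assumption

noncomputable def tau : FigEightGroup →* FigEightGroup :=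
  lift (figEightRelator_tau figEightRelator_ρ_b)

lemma tau_ρ : tau ρ = ρ * b * ρ⁻¹ := lift_ρ _

lemma tau_b : tau b = b⁻¹ * ρ * b := lift_b _

lemma tau_tau_ρ : tau (tau ρ) = b⁻¹ := by
  rw [tau_ρ, _root_.map_mul, _root_.map_mul, _root_.map_inv, tau_ρ, tau_b]
  exact tau_tau_fst figEightRelator_ρ_b

lemma tau_tau_b : tau (tau b) = ρ⁻¹ := by
  rw [tau_b, _root_.map_mul, _root_.map_mul, _root_.map_inv, tau_ρ, tau_b]
  exact tau_tau_snd figEightRelator_ρ_b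

lemma tau_tau_tau_tau (x : FigEightGroup) : tau (tau (tau (tau x))) = x := by
  suffices h : (tau.comp tau).comp (tau.comp tau) = MonoidHom.id _ from DFunLike.congr_fun h x
  refine hom_ext ?_ ?_ <;>
    simp only [MonoidHom.comp_apply, tau_tau_ρ, tau_tau_b, _root_.map_inv, inv_inv,
      MonoidHom.id_apply]

end FigEightGroup

theorem tau_order_four :
    ∃ τ : FigEightGroup ≃* FigEightGroup,
      τ ρ = ρ * b * ρ⁻¹ ∧ τ b = b⁻¹ * ρ * b ∧
      (∀ x, τ (τ (τ (τ x))) = x) ∧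
      τ (τ ρ) = b⁻¹ ∧ τ (τ b) = ρ⁻¹ := by
  open FigEightGroup in
  exact ⟨tau.toMulEquiv ((tau.comp tau).comp tau) (MonoidHom.ext tau_tau_tau_tau)
      (MonoidHom.ext tau_tau_tau_tau), tau_ρ, tau_b, tau_tau_tau_tau, tau_tau_ρ, tau_tau_b⟩
end
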